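/- arXiv:1306.6071 — 3 statements merged into one kernel-verified Lean document; each statement's English description precedes it below -/
import Mathlib

section
/- (Corollary 1, collapse in space-time coordinates.) Let c > 0, let v1, v2 be real with |v1| < c and |v2| < c, and let t1', t2' be real. Write a = √(1 − v1²/c²) and b = √(1 − v2²/c²), and assume D := v2·a − v1·b ≠ 0. Define the phase velocity v_phase = c²·(a + b)/D, the spatial separation Δx = (v2·t2'·a + v1·t1'·b)/(a·b), and the time separation Δt = (t2'·a − t1'·b)/(a·b). Then Δx = v_phase·Δt if and only if t1' = t2'. -/
/-!
With `a = √(1 - v₁²/c²)` and `b = √(1 - v₂²/c²)` one has `a²c² = c² - v₁²` and `b²c² = c² - v₂²`,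
and these two relations reduce the discrepancy `Δx - v_phase Δt` to
`(t₁' - t₂') (a b c² + v₁ v₂ + c²) / D`. The middle factor is positive because `a, b > 0` and
`|v₁ v₂| < c²`, so the discrepancy vanishes exactly when `t₁' = t₂'`.
-/

lemma sqrt_one_sub_sq_div_sq_pos {c v : ℝ} (h : |v| < c) : 0 < √(1 - v ^ 2 / c ^ 2) := by
  have hc : 0 < c := (abs_nonneg v).trans_lt h
  rw [Real.sqrt_pos, sub_pos, div_lt_one (by positivity)]
  exact sq_lt_sq' (abs_lt.mp h).1 (abs_lt.mp h).2

lemma sq_sqrt_one_sub_sq_div_sq_mul_sq {c v : ℝ} (h : |v| < c) :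
    √(1 - v ^ 2 / c ^ 2) ^ 2 * c ^ 2 = c ^ 2 - v ^ 2 := by
  have hc : c ≠ 0 := ((abs_nonneg v).trans_lt h).ne'
  rw [Real.sq_sqrt (Real.sqrt_pos.mp (sqrt_one_sub_sq_div_sq_pos h)).le]
  field_simp

lemma neg_sq_lt_mul_of_abs_lt {c v₁ v₂ : ℝ} (h₁ : |v₁| < c) (h₂ : |v₂| < c) : -c ^ 2 < v₁ * v₂ := by
  have h : |v₁ * v₂| < c ^ 2 := by
    rw [abs_mul, sq]
    exact mul_lt_mul'' h₁ h₂ (abs_nonneg _) (abs_nonneg _)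
  linarith [neg_abs_le (v₁ * v₂)]

section PhaseVelocity

variable {c v₁ v₂ a b : ℝ}

lemma collapse_numerator_eq (ha : a ^ 2 * c ^ 2 = c ^ 2 - v₁ ^ 2) (hb : b ^ 2 * c ^ 2 = c ^ 2 - v₂ ^ 2)
    (t₁ t₂ : ℝ) :
    (v₂ * t₂ * a + v₁ * t₁ * b) * (v₂ * a - v₁ * b) - c ^ 2 * (a + b) * (t₂ * a - t₁ * b) =
      a * b * (t₁ - t₂) * (a * b * c ^ 2 + v₁ * v₂ + c ^ 2) := by
  linear_combination t₂ * a ^ 2 * hb - t₁ * b ^ 2 * ha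

lemma sub_phase_velocity_mul_eq (ha : a ^ 2 * c ^ 2 = c ^ 2 - v₁ ^ 2)
    (hb : b ^ 2 * c ^ 2 = c ^ 2 - v₂ ^ 2) (ha₀ : a ≠ 0) (hb₀ : b ≠ 0) (hD : v₂ * a - v₁ * b ≠ 0)
    (t₁ t₂ : ℝ) :
    (v₂ * t₂ * a + v₁ * t₁ * b) / (a * b) -
        c ^ 2 * (a + b) / (v₂ * a - v₁ * b) * ((t₂ * a - t₁ * b) / (a * b)) =
      (t₁ - t₂) * (a * b * c ^ 2 + v₁ * v₂ + c ^ 2) / (v₂ * a - v₁ * b) := by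
  field_simp
  linear_combination collapse_numerator_eq ha hb t₁ t₂

end PhaseVelocity

theorem collapse_spacetime_proper_times_eq_general
    (c v1 v2 t1' t2' : ℝ) (h1 : |v1| < c) (h2 : |v2| < c)
    (a b D vphase Δx Δt : ℝ)
    (ha : a = Real.sqrt (1 - v1 ^ 2 / c ^ 2))
    (hb : b = Real.sqrt (1 - v2 ^ 2 / c ^ 2))
    (hD : D = v2 * a - v1 * b) (hD0 : D ≠ 0)
    (hv : vphase = c ^ 2 * (a + b) / D)
    (hx : Δx = (v2 * t2' * a + v1 * t1' * b) / (a * b))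
    (ht : Δt = (t2' * a - t1' * b) / (a * b)) :
    Δx = vphase * Δt ↔ t1' = t2' := by
  subst hD hv hx ht
  have ha₀ : 0 < a := ha ▸ sqrt_one_sub_sq_div_sq_pos h1
  have hb₀ : 0 < b := hb ▸ sqrt_one_sub_sq_div_sq_pos h2
  have hK : 0 < a * b * c ^ 2 + v1 * v2 + c ^ 2 := by
    have : 0 ≤ a * b * c ^ 2 := by positivity
    linarith [neg_sq_lt_mul_of_abs_lt h1 h2]
  rw [← sub_eq_zero, sub_phase_velocity_mul_eq (ha ▸ sq_sqrt_one_sub_sq_div_sq_mul_sq h1)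
    (hb ▸ sq_sqrt_one_sub_sq_div_sq_mul_sq h2) ha₀.ne' hb₀.ne' hD0, div_eq_zero_iff,
    or_iff_left hD0, mul_eq_zero, or_iff_left hK.ne', sub_eq_zero]

/-- Corollary 1, collapse in space-time coordinates.
With `a = √(1 − v1²/c²)`, `b = √(1 − v2²/c²)`, `D = v2·a − v1·b ≠ 0`,
phase velocity `v_phase = c²·(a+b)/D`, `Δx = (v2·t2'·a + v1·t1'·b)/(a·b)`,
`Δt = (t2'·a − t1'·b)/(a·b)`, one has `Δx = v_phase·Δt ↔ t1' = t2'`. -/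
theorem collapse_spacetime_proper_times_eq
    (c v1 v2 t1' t2' : ℝ) (hc : 0 < c) (h1 : |v1| < c) (h2 : |v2| < c)
    (a b D vphase Δx Δt : ℝ)
    (ha : a = Real.sqrt (1 - v1 ^ 2 / c ^ 2))
    (hb : b = Real.sqrt (1 - v2 ^ 2 / c ^ 2))
    (hD : D = v2 * a - v1 * b) (hD0 : D ≠ 0)
    (hv : vphase = c ^ 2 * (a + b) / D)
    (hx : Δx = (v2 * t2' * a + v1 * t1' * b) / (a * b))
    (ht : Δt = (t2' * a - t1' * b) / (a * b)) :
    Δx = vphase * Δt ↔ t1' = t2' :=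
  collapse_spacetime_proper_times_eq_general c v1 v2 t1' t2' h1 h2 a b D vphase Δx Δt ha hb hD hD0
    hv hx ht
end

section
/- (Collapse in energy-momentum space, equations (5g)–(5l).) Let c > 0, let v1, v2 be real with |v1| < c, |v2| < c and v1² ≠ v2², and let t1', t2' be real. Write a = √(1 − v1²/c²) and b = √(1 − v2²/c²), and assume v2·t2'·a − v1·t1'·b ≠ 0. If (v2·a + v1·b)/(c²·(a − b)) = (t2'·a + t1'·b)/(v2·t2'·a − v1·t1'·b), then t1' = t2'. -/
/-!
Cross-multiplying, and using `c²a² = c² − v1²`, `c²b² = c² − v2²`, the hypothesis factors as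
`(t1' − t2') · ab · (c²ab − v1v2 − c²) = 0`. Here `ab > 0`, and `c²ab − v1v2 < c²` because
`(ca, v1)` and `(cb, −v2)` are distinct points of the circle of radius `c`, so their dot product
is below `c²`. Hence `t1' = t2'`.
-/

lemma mul_add_mul_lt_of_sq_add_sq_eq {x y u w r : ℝ} (hxu : x ^ 2 + u ^ 2 = r)
    (hyw : y ^ 2 + w ^ 2 = r) (huw : u ≠ w) : x * y + u * w < r := by
  nlinarith [sq_pos_of_ne_zero (sub_ne_zero.2 huw), sq_nonneg (x - y)]

section LorentzFactor

variable {c v : ℝ}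

lemma one_sub_sq_div_sq_pos (h : v ^ 2 < c ^ 2) : 0 < 1 - v ^ 2 / c ^ 2 := by
  rw [sub_pos, div_lt_one ((sq_nonneg v).trans_lt h)]
  exact h

lemma mul_sq_sqrt_one_sub_sq_div_sq (h : v ^ 2 ≤ c ^ 2) :
    c ^ 2 * √(1 - v ^ 2 / c ^ 2) ^ 2 = c ^ 2 - v ^ 2 := by
  rcases eq_or_ne c 0 with rfl | hc
  · nlinarith [sq_nonneg v]
  rw [Real.sq_sqrt (sub_nonneg.2 (div_le_one_of_le₀ h (sq_nonneg c)))]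
  field_simp

end LorentzFactor

lemma collapse_factorization {c v1 v2 t1 t2 a b : ℝ} (hA : c ^ 2 * a ^ 2 = c ^ 2 - v1 ^ 2)
    (hB : c ^ 2 * b ^ 2 = c ^ 2 - v2 ^ 2) :
    (v2 * a + v1 * b) * (v2 * t2 * a - v1 * t1 * b) - (t2 * a + t1 * b) * (c ^ 2 * (a - b))
      = (t1 - t2) * (a * b * (c ^ 2 * a * b - v1 * v2 - c ^ 2)) := by
  linear_combination t2 * a ^ 2 * hB - t1 * b ^ 2 * hA

theorem collapse_energy_momentum_general (c v1 v2 t1' t2' : ℝ)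
    (h1 : |v1| < c) (h2 : |v2| < c) (hne : v1 ^ 2 ≠ v2 ^ 2)
    (a b : ℝ)
    (ha : a = Real.sqrt (1 - v1 ^ 2 / c ^ 2))
    (hb : b = Real.sqrt (1 - v2 ^ 2 / c ^ 2))
    (hden : v2 * t2' * a - v1 * t1' * b ≠ 0)
    (heq : (v2 * a + v1 * b) / (c ^ 2 * (a - b))
        = (t2' * a + t1' * b) / (v2 * t2' * a - v1 * t1' * b)) :
    t1' = t2' := by
  have hc : c ≠ 0 := ((abs_nonneg v1).trans_lt h1).ne'
  have hv1 : v1 ^ 2 < c ^ 2 := sq_lt_sq' (abs_lt.1 h1).1 (abs_lt.1 h1).2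
  have hv2 : v2 ^ 2 < c ^ 2 := sq_lt_sq' (abs_lt.1 h2).1 (abs_lt.1 h2).2
  have ha0 : 0 < a := ha ▸ Real.sqrt_pos.2 (one_sub_sq_div_sq_pos hv1)
  have hb0 : 0 < b := hb ▸ Real.sqrt_pos.2 (one_sub_sq_div_sq_pos hv2)
  have hA : c ^ 2 * a ^ 2 = c ^ 2 - v1 ^ 2 := ha ▸ mul_sq_sqrt_one_sub_sq_div_sq hv1.le
  have hB : c ^ 2 * b ^ 2 = c ^ 2 - v2 ^ 2 := hb ▸ mul_sq_sqrt_one_sub_sq_div_sq hv2.le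
  have hab : a ≠ b := by
    rintro rfl
    exact hne (by linarith)
  have hcross := (div_eq_div_iff (mul_ne_zero (pow_ne_zero 2 hc) (sub_ne_zero.2 hab)) hden).1 heq
  have hdot : c * a * (c * b) + v1 * -v2 < c ^ 2 :=
    mul_add_mul_lt_of_sq_add_sq_eq (by linear_combination hA) (by linear_combination hB)
      fun h ↦ hne (by rw [h]; ring)
  have hfactor : a * b * (c ^ 2 * a * b - v1 * v2 - c ^ 2) ≠ 0 :=
    mul_ne_zero (mul_pos ha0 hb0).ne' (by linarith)
  refine sub_eq_zero.1 ((mul_eq_zero_iff_right hfactor).1 ?_)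
  rw [← collapse_factorization hA hB, hcross, sub_self]

/-- Collapse in energy-momentum space, equations (5g)–(5l).
With `a = √(1 − v1²/c²)`, `b = √(1 − v2²/c²)`, `v1² ≠ v2²`, and
`v2·t2'·a − v1·t1'·b ≠ 0`, if
`(v2·a + v1·b)/(c²·(a − b)) = (t2'·a + t1'·b)/(v2·t2'·a − v1·t1'·b)`
then `t1' = t2'`. -/
theorem collapse_energy_momentum (c v1 v2 t1' t2' : ℝ) (hc : 0 < c)
    (h1 : |v1| < c) (h2 : |v2| < c) (hne : v1 ^ 2 ≠ v2 ^ 2)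
    (a b : ℝ)
    (ha : a = Real.sqrt (1 - v1 ^ 2 / c ^ 2))
    (hb : b = Real.sqrt (1 - v2 ^ 2 / c ^ 2))
    (hden : v2 * t2' * a - v1 * t1' * b ≠ 0)
    (heq : (v2 * a + v1 * b) / (c ^ 2 * (a - b))
        = (t2' * a + t1' * b) / (v2 * t2' * a - v1 * t1' * b)) :
    t1' = t2' :=
  collapse_energy_momentum_general c v1 v2 t1' t2' h1 h2 hne a b ha hb hden heq
end

section
/- (Theorem 3: the speed of the exchanged virtual particle equals the phase velocity of the entangled system.) Let c > 0 and let m_e, m_μ > 0. Let E_e, E_e', E_μ, E_μ' > 0 and p_e, p_e', p_μ, p_μ' be real numbers satisfying the mass-shell conditions E_e² = c²·p_e² + m_e²·c⁴, E_e'² = c²·p_e'² + m_e²·c⁴, E_μ² = c²·p_μ² + m_μ²·c⁴, E_μ'² = c²·p_μ'² + m_μ²·c⁴, and the conservation laws E_e + E_μ = E_e' + E_μ' and p_e + p_μ = p_e' + p_μ'. Assume p_e + p_μ ≠ 0, p_e + p_e' ≠ 0, p_μ + p_μ' ≠ 0, and E_e' ≠ E_e. Then (E_e + E_μ)/(p_e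 + p_μ) = c²·(p_e' − p_e)/(E_e' − E_e); that is, the phase velocity of the two-particle system equals the speed of the exchanged virtual photon. -/
/-!
Two states of one particle on the same mass shell satisfy
`(E' - E)(E' + E) = c² (p' - p)(p' + p)`. Conservation makes the energy and momentum transfers
of the electron and of the muon equal and opposite, so adding the two identities gives
`ΔE · 2(E_e + E_μ) = c² Δp · 2(p_e + p_μ)`, which is the claimed equality of ratios.
-/

theorem sub_mul_add_eq_of_massShell {R : Type*} [CommRing R] {c m E E' p p' : R}
    (h : E ^ 2 = c ^ 2 * p ^ 2 + m ^ 2 * c ^ 4) (h' : E' ^ 2 = c ^ 2 * p' ^ 2 + m ^ 2 * c ^ 4) :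
    (E' - E) * (E' + E) = c ^ 2 * ((p' - p) * (p' + p)) := by
  linear_combination h' - h

theorem energyTransfer_mul_totalEnergy_eq {K : Type*} [Field K] [NeZero (2 : K)]
    {c me mμ Ee Ee' Eμ Eμ' pe pe' pμ pμ' : K}
    (shell_e : Ee ^ 2 = c ^ 2 * pe ^ 2 + me ^ 2 * c ^ 4)
    (shell_e' : Ee' ^ 2 = c ^ 2 * pe' ^ 2 + me ^ 2 * c ^ 4)
    (shell_μ : Eμ ^ 2 = c ^ 2 * pμ ^ 2 + mμ ^ 2 * c ^ 4)
    (shell_μ' : Eμ' ^ 2 = c ^ 2 * pμ' ^ 2 + mμ ^ 2 * c ^ 4)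
    (consE : Ee + Eμ = Ee' + Eμ') (consP : pe + pμ = pe' + pμ') :
    (Ee + Eμ) * (Ee' - Ee) = c ^ 2 * (pe' - pe) * (pe + pμ) := by
  have electron := sub_mul_add_eq_of_massShell shell_e shell_e'
  have muon := sub_mul_add_eq_of_massShell shell_μ' shell_μ
  have muon_transfer_E : Eμ - Eμ' = Ee' - Ee := by linear_combination consE
  have muon_transfer_p : pμ - pμ' = pe' - pe := by linear_combination consP
  rw [muon_transfer_E, muon_transfer_p] at muon
  have doubled : 2 * ((Ee + Eμ) * (Ee' - Ee)) = 2 * (c ^ 2 * (pe' - pe) * (pe + pμ)) := by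
    linear_combination electron + muon + (Ee' - Ee) * consE - c ^ 2 * (pe' - pe) * consP
  exact mul_left_cancel₀ (NeZero.ne 2) doubled

theorem virtual_particle_speed_eq_phase_velocity_general
    (c me mμ Ee Ee' Eμ Eμ' pe pe' pμ pμ' : ℝ)
    (shell_e : Ee ^ 2 = c ^ 2 * pe ^ 2 + me ^ 2 * c ^ 4)
    (shell_e' : Ee' ^ 2 = c ^ 2 * pe' ^ 2 + me ^ 2 * c ^ 4)
    (shell_μ : Eμ ^ 2 = c ^ 2 * pμ ^ 2 + mμ ^ 2 * c ^ 4)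
    (shell_μ' : Eμ' ^ 2 = c ^ 2 * pμ' ^ 2 + mμ ^ 2 * c ^ 4)
    (consE : Ee + Eμ = Ee' + Eμ')
    (consP : pe + pμ = pe' + pμ')
    (hP : pe + pμ ≠ 0)
    (hEne : Ee' ≠ Ee) :
    (Ee + Eμ) / (pe + pμ) = c ^ 2 * (pe' - pe) / (Ee' - Ee) :=
  (div_eq_div_iff hP (sub_ne_zero.mpr hEne)).mpr
    (energyTransfer_mul_totalEnergy_eq shell_e shell_e' shell_μ shell_μ' consE consP)

/-- Theorem 3: with mass-shell conditions and energy-momentum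
conservation in electron–muon scattering, the phase velocity of the
two-particle system equals the speed of the exchanged virtual photon:
`(E_e + E_μ)/(p_e + p_μ) = c²·(p_e' − p_e)/(E_e' − E_e)`. -/
theorem virtual_particle_speed_eq_phase_velocity
    (c me mμ Ee Ee' Eμ Eμ' pe pe' pμ pμ' : ℝ)
    (hc : 0 < c) (hme : 0 < me) (hmμ : 0 < mμ)
    (hEe : 0 < Ee) (hEe' : 0 < Ee') (hEμ : 0 < Eμ) (hEμ' : 0 < Eμ')
    (shell_e : Ee ^ 2 = c ^ 2 * pe ^ 2 + me ^ 2 * c ^ 4)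
    (shell_e' : Ee' ^ 2 = c ^ 2 * pe' ^ 2 + me ^ 2 * c ^ 4)
    (shell_μ : Eμ ^ 2 = c ^ 2 * pμ ^ 2 + mμ ^ 2 * c ^ 4)
    (shell_μ' : Eμ' ^ 2 = c ^ 2 * pμ' ^ 2 + mμ ^ 2 * c ^ 4)
    (consE : Ee + Eμ = Ee' + Eμ')
    (consP : pe + pμ = pe' + pμ')
    (hP : pe + pμ ≠ 0) (hPe : pe + pe' ≠ 0) (hPμ : pμ + pμ' ≠ 0)
    (hEne : Ee' ≠ Ee) :
    (Ee + Eμ) / (pe + pμ) = c ^ 2 * (pe' - pe) / (Ee' - Ee) :=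
  virtual_particle_speed_eq_phase_velocity_general c me mμ Ee Ee' Eμ Eμ' pe pe' pμ pμ' shell_e
    shell_e' shell_μ shell_μ' consE consP hP hEne
end
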